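/- arXiv:1011.6252 — 7 statements merged into one kernel-verified Lean document; each statement's English description precedes it below -/
import Mathlib

section
/- The function ω(t) := (1 − e^t)·ln(1 − e^{−t}) + t is concave on (0,∞); equivalently, its second derivative −s/(s−1) + s·ln(s/(s−1)) with s = e^t is ≤ 0 for all t > 0. -/
/-!
Since `1 - e^{-t} = (e^t - 1)/e^t`, the derivative of `ω` simplifies to `ω'(t) = s ln (s/(s-1))`
with `s = e^t`, and differentiating once more gives exactly the expression
`-s/(s-1) + s ln (s/(s-1))` of the statement. It is nonpositive by `ln y ≤ y - 1` at
`y = s/(s-1)`, so `ω` is concave by the second derivative test.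
-/

open Real

lemma mul_log_div_sub_one_le {s : ℝ} (hs : 1 < s) : s * log (s / (s - 1)) ≤ s / (s - 1) := by
  have hs1 : 0 < s - 1 := sub_pos.mpr hs
  calc s * log (s / (s - 1)) ≤ s * (s / (s - 1) - 1) := by
        gcongr; exact log_le_sub_one_of_pos (by positivity)
    _ = s / (s - 1) := by field_simp; ring

lemma log_one_sub_exp_neg (t : ℝ) : log (1 - exp (-t)) = -log (exp t / (exp t - 1)) := by
  rw [← log_inv, inv_div, exp_neg]
  congr 1
  field_simp

lemma hasDerivAt_omega {t : ℝ} (ht : t ≠ 0) :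
    HasDerivAt (fun t => (1 - exp t) * log (1 - exp (-t)) + t)
      (exp t * log (exp t / (exp t - 1))) t := by
  have hne : exp t - 1 ≠ 0 := by rw [sub_ne_zero, Ne, exp_eq_one_iff]; exact ht
  have hne' : 1 - exp (-t) ≠ 0 := by
    rw [sub_ne_zero, ne_comm, Ne, exp_eq_one_iff, neg_eq_zero]; exact ht
  have hlog : HasDerivAt (fun t => log (1 - exp (-t))) (exp (-t) / (1 - exp (-t))) t := by
    simpa using (((hasDerivAt_neg t).exp).const_sub 1).log hne'
  refine ((((hasDerivAt_exp t).const_sub 1).fun_mul hlog).fun_add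
    (hasDerivAt_id' t)).congr_deriv ?_
  rw [log_one_sub_exp_neg, exp_neg]
  field_simp
  ring

lemma hasDerivAt_exp_mul_log_exp_div {t : ℝ} (ht : t ≠ 0) :
    HasDerivAt (fun t => exp t * log (exp t / (exp t - 1)))
      (-(exp t / (exp t - 1)) + exp t * log (exp t / (exp t - 1))) t := by
  have hne : exp t - 1 ≠ 0 := by rw [sub_ne_zero, Ne, exp_eq_one_iff]; exact ht
  have hlog := ((hasDerivAt_exp t).fun_div ((hasDerivAt_exp t).sub_const 1) hne).log
    (div_ne_zero (exp_pos t).ne' hne)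
  refine ((hasDerivAt_exp t).fun_mul hlog).congr_deriv ?_
  field_simp
  ring

/-- The function `ω(t) = (1 - e^t) ln (1 - e^{-t}) + t` is concave on `(0, ∞)`;
moreover its second derivative `-s/(s-1) + s ln (s/(s-1))`, with `s = e^t`,
is nonpositive for all `t > 0`. -/
theorem omega_concaveOn :
    ConcaveOn ℝ (Set.Ioi (0 : ℝ))
      (fun t => (1 - Real.exp t) * Real.log (1 - Real.exp (-t)) + t) ∧
    ∀ t : ℝ, 0 < t →
      -(Real.exp t / (Real.exp t - 1))
        + Real.exp t * Real.log (Real.exp t / (Real.exp t - 1)) ≤ 0 := by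
  have hω'' : ∀ t : ℝ, 0 < t →
      -(exp t / (exp t - 1)) + exp t * log (exp t / (exp t - 1)) ≤ 0 := fun t ht => by
    linarith [mul_log_div_sub_one_le (one_lt_exp_iff.mpr ht)]
  refine ⟨concaveOn_of_hasDerivWithinAt2_nonpos (convex_Ioi 0)
    (f' := fun t => exp t * log (exp t / (exp t - 1)))
    (f'' := fun t => -(exp t / (exp t - 1)) + exp t * log (exp t / (exp t - 1))) ?_ ?_ ?_ ?_, hω''⟩
  · exact continuousOn_of_forall_continuousAt fun t ht =>
      (hasDerivAt_omega ht.ne').continuousAt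
  all_goals rw [interior_Ioi]
  · exact fun t ht => (hasDerivAt_omega ht.ne').hasDerivWithinAt
  · exact fun t ht => (hasDerivAt_exp_mul_log_exp_div ht.ne').hasDerivWithinAt
  · exact hω''
end

section
/- Among all vectors Y = (Y_1,…,Y_m) of independent geometrically distributed random variables with fixed total entropy Ω, the point concentration conc(Y) = ∏_{i=1}^m (1 − r_i) (where r_i is the parameter of Y_i) is maximized when all Y_i are identically distributed. Equivalently: for t_1,…,t_m ≥ 0 with ∑_i ω(t_i) = Ω fixed, where ω(t) = (1−e^t)ln(1−e^{−t}) + t, the sum ∑_i t_i is minimized when t_1 = … = t_m. -/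
/-! On `[0, ∞)` the function `ω` is strictly increasing and concave: its second derivative is
`e^t (log (e^t / (e^t - 1)) - 1 / (e^t - 1)) ≤ 0` by `log x ≤ x - 1`. Jensen's inequality then
gives `ω c = (1/m) ∑ ω (tᵢ) ≤ ω ((1/m) ∑ tᵢ)`, and monotonicity turns this into
`c ≤ (1/m) ∑ tᵢ`. -/

/-- `ω(t) = (1 - e^t) ln (1 - e^{-t}) + t`, the entropy of a geometric random
variable with parameter `r`, where `t = ln (1/(1-r))`. -/
noncomputable def omegaEnt (t : ℝ) : ℝ :=
  (1 - Real.exp t) * Real.log (1 - Real.exp (-t)) + t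

open Real Finset

lemma ConcaveOn.card_mul_le_sum_of_sum_map_eq {ι : Type*} {s : Finset ι} {D : Set ℝ} {f : ℝ → ℝ}
    (hconc : ConcaveOn ℝ D f) (hmono : StrictMonoOn f D) {t : ι → ℝ} (ht : ∀ i ∈ s, t i ∈ D)
    {c : ℝ} (hc : c ∈ D) (hsum : ∑ i ∈ s, f (t i) = #s * f c) :
    #s * c ≤ ∑ i ∈ s, t i := by
  rcases s.eq_empty_or_nonempty with rfl | hs
  · simp
  have hn : (0 : ℝ) < #s := by exact_mod_cast hs.card_pos
  have hw₀ : ∀ i ∈ s, (0 : ℝ) ≤ (#s : ℝ)⁻¹ := fun _ _ => by positivity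
  have hw₁ : ∑ _ ∈ s, (#s : ℝ)⁻¹ = 1 := by simp [hn.ne']
  have hmean : (#s : ℝ)⁻¹ * ∑ i ∈ s, t i ∈ D := by
    simpa [smul_eq_mul, mul_sum] using hconc.1.sum_mem hw₀ hw₁ ht
  have hjensen : f c ≤ f ((#s : ℝ)⁻¹ * ∑ i ∈ s, t i) := by
    have := hconc.le_map_sum hw₀ hw₁ ht
    simp only [smul_eq_mul, ← mul_sum, hsum] at this
    rwa [inv_mul_cancel_left₀ hn.ne'] at this
  have hc_le := (hmono.le_iff_le hc hmean).mp hjensen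
  calc (#s : ℝ) * c ≤ #s * ((#s : ℝ)⁻¹ * ∑ i ∈ s, t i) := by gcongr
    _ = ∑ i ∈ s, t i := mul_inv_cancel_left₀ hn.ne' _

/-- Agrees with `omegaEnt` on `[0, ∞)`, but is continuous on all of `ℝ` because `x log x` is,
which avoids the `log 0` of `omegaEnt` at `t = 0`. -/
noncomputable def omegaEntExt (t : ℝ) : ℝ :=
  t * exp t - (exp t - 1) * log (exp t - 1)

noncomputable def omegaEntExtDeriv (t : ℝ) : ℝ :=
  exp t * (t - log (exp t - 1))

lemma exp_sub_one_ne_zero {t : ℝ} (ht : t ≠ 0) : exp t - 1 ≠ 0 :=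
  sub_ne_zero.mpr ((Real.exp_eq_one_iff t).not.mpr ht)

lemma omegaEnt_eq_omegaEntExt {t : ℝ} (ht : 0 ≤ t) : omegaEnt t = omegaEntExt t := by
  rcases ht.eq_or_lt with rfl | ht
  · simp [omegaEnt, omegaEntExt]
  have h : 1 - exp (-t) = exp (-t) * (exp t - 1) := by
    rw [mul_sub, ← exp_add, neg_add_cancel, exp_zero, mul_one]
  rw [omegaEnt, omegaEntExt, h, log_mul (exp_ne_zero _) (exp_sub_one_ne_zero ht.ne'), log_exp]
  ring

lemma continuous_omegaEntExt : Continuous omegaEntExt := by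
  have hE : Continuous fun t => exp t - 1 := continuous_exp.sub continuous_const
  exact (continuous_id.mul continuous_exp).sub (continuous_mul_log.comp hE)

lemma hasDerivAt_omegaEntExt {t : ℝ} (ht : t ≠ 0) :
    HasDerivAt omegaEntExt (omegaEntExtDeriv t) t := by
  have hE : HasDerivAt (fun t => exp t - 1) (exp t) t := (hasDerivAt_exp t).sub_const 1
  have h := ((hasDerivAt_id t).mul (hasDerivAt_exp t)).sub
    ((hasDerivAt_mul_log (exp_sub_one_ne_zero ht)).comp t hE)
  exact h.congr_deriv (by simp only [omegaEntExtDeriv, id]; ring)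

lemma hasDerivAt_omegaEntExtDeriv {t : ℝ} (ht : t ≠ 0) :
    HasDerivAt omegaEntExtDeriv (exp t * (t - log (exp t - 1) - 1 / (exp t - 1))) t := by
  have hE : HasDerivAt (fun t => exp t - 1) (exp t) t := (hasDerivAt_exp t).sub_const 1
  have h := (hasDerivAt_exp t).mul ((hasDerivAt_id t).sub (hE.log (exp_sub_one_ne_zero ht)))
  exact h.congr_deriv (by simp only [Pi.sub_apply, id]; field_simp [exp_sub_one_ne_zero ht]; ring)

lemma sub_log_exp_sub_one_le {t : ℝ} (ht : 0 < t) : t - log (exp t - 1) ≤ 1 / (exp t - 1) := by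
  have hpos : 0 < exp t - 1 := sub_pos.mpr (one_lt_exp_iff.mpr ht)
  have h := log_le_sub_one_of_pos (div_pos (exp_pos t) hpos)
  rw [log_div (exp_ne_zero t) hpos.ne', log_exp] at h
  calc t - log (exp t - 1) ≤ exp t / (exp t - 1) - 1 := h
    _ = 1 / (exp t - 1) := by field_simp; ring

lemma strictMonoOn_omegaEntExt : StrictMonoOn omegaEntExt (Set.Ici 0) := by
  refine strictMonoOn_of_hasDerivWithinAt_pos (convex_Ici 0) continuous_omegaEntExt.continuousOn
    (fun t ht => (hasDerivAt_omegaEntExt (ne_of_gt ?_)).hasDerivWithinAt) fun t ht => ?_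
  all_goals rw [interior_Ici, Set.mem_Ioi] at ht
  · exact ht
  have hpos : 0 < exp t - 1 := sub_pos.mpr (one_lt_exp_iff.mpr ht)
  have hlog : log (exp t - 1) < t := by
    simpa using log_lt_log hpos (sub_one_lt (exp t))
  exact mul_pos (exp_pos t) (sub_pos.mpr hlog)

lemma concaveOn_omegaEntExt : ConcaveOn ℝ (Set.Ici 0) omegaEntExt := by
  refine concaveOn_of_hasDerivWithinAt2_nonpos (convex_Ici 0) continuous_omegaEntExt.continuousOn
    (fun t ht => (hasDerivAt_omegaEntExt (ne_of_gt ?_)).hasDerivWithinAt)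
    (fun t ht => (hasDerivAt_omegaEntExtDeriv (ne_of_gt ?_)).hasDerivWithinAt) fun t ht => ?_
  all_goals rw [interior_Ici, Set.mem_Ioi] at ht
  · exact ht
  · exact ht
  exact mul_nonpos_of_nonneg_of_nonpos (exp_pos t).le
    (sub_nonpos.mpr (sub_log_exp_sub_one_le ht))

/-- Among vectors of independent geometric random variables with fixed total
entropy `Ω = ∑ ω(tᵢ)`, the concentration `∏ (1 - rᵢ) = exp (-∑ tᵢ)` is maximized
(equivalently, `∑ tᵢ` is minimized) when all coordinates are identically
distributed: if the constant vector with value `c ≥ 0` has the same total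
entropy as `t`, then `m * c ≤ ∑ tᵢ`, i.e.
`∏ (1 - rᵢ) ≤ exp (-m * c)`. -/
theorem conc_le_of_entropy_eq (m : ℕ) (t : Fin m → ℝ) (c : ℝ)
    (ht : ∀ i, 0 ≤ t i) (hc : 0 ≤ c)
    (hent : ∑ i, omegaEnt (t i) = (m : ℝ) * omegaEnt c) :
    (m : ℝ) * c ≤ ∑ i, t i ∧
      Real.exp (-∑ i, t i) ≤ Real.exp (-((m : ℝ) * c)) := by
  have hext : ∑ i, omegaEntExt (t i) = #(univ : Finset (Fin m)) * omegaEntExt c := by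
    simpa only [omegaEnt_eq_omegaEntExt (ht _), omegaEnt_eq_omegaEntExt hc, card_univ,
      Fintype.card_fin] using hent
  have hsum : (m : ℝ) * c ≤ ∑ i, t i := by
    simpa using concaveOn_omegaEntExt.card_mul_le_sum_of_sum_map_eq strictMonoOn_omegaEntExt
      (fun i _ => ht i) hc hext
  exact ⟨hsum, exp_le_exp.mpr (neg_le_neg hsum)⟩
end

section
/- Let X_1,…,X_n be independent geometric random variables with parameters q_1,…,q_n ∈ [0,1), let a_1,…,a_n ∈ ℝ^m be the columns of a rank-m real matrix A, and suppose a_{j_1},…,a_{j_m} are linearly independent. Then the point concentration of AX = X_1 a_1 + … + X_n a_n satisfies conc(AX) ≤ (1−q_{j_1})(1−q_{j_2})⋯(1−q_{j_m}). -/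
/-!
Condition on the coordinates `X j` with `j` outside the range of `J`. Once they are fixed,
linear independence of the columns `a (J i)` leaves at most one value of the vector
`(X (J i))ᵢ` for which `AX = y`; by independence that value has probability
`∏ i, (1 - q (J i)) q (J i) ^ kᵢ ≤ ∏ i, (1 - q (J i))`, and averaging over the
conditioning keeps the bound.
-/

open MeasureTheory ProbabilityTheory

namespace ProbabilityTheory

theorem IndepFun.measure_preimage_le_of_fiber_subsingleton
    {Ω β γ : Type*} [MeasurableSpace Ω] {μ : Measure Ω} [IsProbabilityMeasure μ]
    [MeasurableSpace β] [MeasurableSpace γ] [MeasurableSingletonClass γ]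
    {Y : Ω → β} {Z : Ω → γ} (hYZ : IndepFun Y Z μ) (hY : Measurable Y) (hZ : Measurable Z)
    {S : Set (β × γ)} (hS : MeasurableSet S) (hfiber : ∀ b, (Prod.mk b ⁻¹' S).Subsingleton)
    {c : ENNReal} (hc : ∀ z, μ (Z ⁻¹' {z}) ≤ c) :
    μ ((fun ω => (Y ω, Z ω)) ⁻¹' S) ≤ c := by
  have hfiber_le : ∀ b, μ.map Z (Prod.mk b ⁻¹' S) ≤ c := fun b => by
    obtain h | ⟨z, h⟩ := (hfiber b).eq_empty_or_singleton
    · simp [h]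
    · rw [h, Measure.map_apply hZ (measurableSet_singleton z)]
      exact hc z
  calc μ ((fun ω => (Y ω, Z ω)) ⁻¹' S)
      = (μ.map Y).prod (μ.map Z) S := by
        rw [← hYZ.map_prod_eq_prod_map_map hY.aemeasurable hZ.aemeasurable,
          Measure.map_apply (hY.prodMk hZ) hS]
    _ = ∫⁻ b, μ.map Z (Prod.mk b ⁻¹' S) ∂μ.map Y := Measure.prod_apply hS
    _ ≤ ∫⁻ _, c ∂μ.map Y := lintegral_mono hfiber_le
    _ = c := by simp [Measure.map_apply hY MeasurableSet.univ]

theorem iIndepFun.measure_pi_preimage_singleton {Ω ι β : Type*} [MeasurableSpace Ω]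
    {μ : Measure Ω} [Fintype ι] [MeasurableSpace β] [MeasurableSingletonClass β]
    {f : ι → Ω → β} (hf : iIndepFun f μ) (z : ι → β) :
    μ ((fun ω i => f i ω) ⁻¹' {z}) = ∏ i, μ (f i ⁻¹' {z i}) := by
  have hpreimage : (fun ω i => f i ω) ⁻¹' {z} = ⋂ i, f i ⁻¹' {z i} := by
    ext ω
    simp [funext_iff]
  rw [hpreimage]
  exact hf.meas_iInter fun i => ⟨{z i}, measurableSet_singleton _, rfl⟩

end ProbabilityTheory

theorem LinearIndependent.injective_natCast_sum_smul {ι R M : Type*} [Fintype ι] [Semiring R]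
    [CharZero R] [AddCommMonoid M] [Module R M] {v : ι → M} (hv : LinearIndependent R v) :
    Function.Injective fun z : ι → ℕ => ∑ i, (z i : R) • v i :=
  hv.fintypeLinearCombination_injective.comp fun _ _ h =>
    funext fun i => Nat.cast_injective (congrFun h i)

theorem Fintype.sum_eq_sum_compl_image_add_sum_comp {ι κ M : Type*} [Fintype ι] [Fintype κ]
    [DecidableEq ι] [AddCommMonoid M] {J : κ → ι} (hJ : J.Injective) (f : ι → M) :
    ∑ j, f j = ∑ j : ↥(Finset.univ.image J)ᶜ, f j + ∑ i, f (J i) := by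
  rw [← Finset.sum_compl_add_sum (Finset.univ.image J), Finset.sum_coe_sort,
    Finset.sum_image fun i _ i' _ h => hJ h]

/-- Theorem 1 (core inequality): if `X₁, …, Xₙ` are independent geometric random
variables with parameters `q₁, …, qₙ ∈ [0,1)`, `a₁, …, aₙ ∈ ℝᵐ` are the columns
of a matrix, and the columns `a_{j₁}, …, a_{jₘ}` are linearly independent,
then the point concentration of `AX = ∑ Xⱼ aⱼ` is at most
`(1 - q_{j₁}) ⋯ (1 - q_{jₘ})`. -/
theorem conc_AX_le_prod
    {Ω : Type*} [MeasurableSpace Ω] (μ : Measure Ω) [IsProbabilityMeasure μ]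
    (m n : ℕ) (q : Fin n → ℝ) (hq0 : ∀ j, 0 ≤ q j) (hq1 : ∀ j, q j < 1)
    (X : Fin n → Ω → ℕ) (hXmeas : ∀ j, Measurable (X j))
    (hindep : iIndepFun X μ)
    (hgeom : ∀ j k, μ {ω | X j ω = k} = ENNReal.ofReal ((1 - q j) * (q j) ^ k))
    (a : Fin n → Fin m → ℝ)
    (J : Fin m → Fin n)
    (hli : LinearIndependent ℝ fun i => a (J i)) :
    ∀ y : Fin m → ℝ,
      μ {ω | ∑ j, (X j ω : ℝ) • a j = y} ≤
        ENNReal.ofReal (∏ i, (1 - q (J i))) := by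
  intro y
  have hJ : J.Injective := hli.injective.of_comp
  set K := Finset.univ.image J
  let Y : Ω → (↥Kᶜ → ℕ) := fun ω j => X j ω
  let Z : Ω → (Fin m → ℕ) := fun ω i => X (J i) ω
  have hYZ : IndepFun Y Z μ :=
    (hindep.indepFun_finset Kᶜ K disjoint_compl_left hXmeas).comp measurable_id
      (measurable_of_countable fun (w : ↥K → ℕ) i =>
        w ⟨J i, Finset.mem_image_of_mem J (Finset.mem_univ i)⟩)
  have hZ : ∀ z, μ (Z ⁻¹' {z}) ≤ ENNReal.ofReal (∏ i, (1 - q (J i))) := fun z => by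
    refine ((hindep.precomp (g := J) hJ).measure_pi_preimage_singleton z).trans_le ?_
    rw [ENNReal.ofReal_prod_of_nonneg fun i _ => sub_nonneg.2 (hq1 (J i)).le]
    refine Finset.prod_le_prod' fun i _ => (hgeom (J i) (z i)).le.trans ?_
    exact ENNReal.ofReal_le_ofReal
      (mul_le_of_le_one_right (sub_nonneg.2 (hq1 _).le) (pow_le_one₀ (hq0 _) (hq1 _).le))
  let S : Set ((↥Kᶜ → ℕ) × (Fin m → ℕ)) :=
    {p | ∑ j, (p.1 j : ℝ) • a j + ∑ i, (p.2 i : ℝ) • a (J i) = y}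
  have hevent : {ω | ∑ j, (X j ω : ℝ) • a j = y} = (fun ω => (Y ω, Z ω)) ⁻¹' S :=
    Set.ext fun ω => Iff.of_eq
      (congrArg (· = y) (Fintype.sum_eq_sum_compl_image_add_sum_comp hJ _))
  rw [hevent]
  refine hYZ.measure_preimage_le_of_fiber_subsingleton
    (measurable_pi_lambda _ fun j => hXmeas j) (measurable_pi_lambda _ fun i => hXmeas (J i))
    S.to_countable.measurableSet (fun b z hz z' hz' => ?_) hZ
  exact hli.injective_natCast_sum_smul (add_left_cancel (hz.trans hz'.symm))
end

section
/- Let γ > 0 and α > 0, and define c := max{ (1/γ²)·ln[1 + α(1 − cos(γ/√α))], (1/(απ²))·ln[1 + 2α] }. Then for all t with 0 ≤ t ≤ min{γ/√α, π}, we have 1 + α(1 − cos t) ≥ exp(c·α·t²). -/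
/-!
Write `L t = log (1 + α (1 - cos t))`. Since `1 - cos t = 2 sin² (t / 2)` and `sin` is concave on
`[0, π]`, shrinking `t` by a factor `λ ≤ 1` shrinks `1 - cos t` by at most `λ²`; concavity of
`log (1 + ·)` then gives `L (λ t) ≥ λ² L t`, so `L t / t²` is antitone on `(0, 2π]`. Both terms of
the maximum defining `c` are of the form `α⁻¹ L s / s²`, with `s = γ / √α` and `s = π`, and
the second one also dominates the first when `γ / √α > π`; so `c α t² ≤ L t` on the given range.
-/

open Real

lemma ConcaveOn.smul_le_map_smul {E : Type*} [AddCommGroup E] [Module ℝ E] {s : Set E}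
    {f : E → ℝ} (hf : ConcaveOn ℝ s f) (h0 : 0 ∈ s) (hf0 : 0 ≤ f 0) {y : E} (hy : y ∈ s)
    {l : ℝ} (hl0 : 0 ≤ l) (hl1 : l ≤ 1) : l * f y ≤ f (l • y) := by
  have h := hf.2 h0 hy (sub_nonneg.2 hl1) hl0 (sub_add_cancel 1 l)
  simp only [smul_zero, zero_add, smul_eq_mul] at h
  nlinarith [mul_nonneg (sub_nonneg.2 hl1) hf0]

namespace Real

lemma mul_log_one_add_le_log_one_add_mul {m x : ℝ} (hm0 : 0 ≤ m) (hm1 : m ≤ 1) (hx : -1 < x) :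
    m * log (1 + x) ≤ log (1 + m * x) := by
  have hx' : 0 < 1 + x := by linarith
  rw [← log_rpow hx']
  exact log_le_log (rpow_pos_of_pos hx' m) (rpow_one_add_le_one_add_mul_self hx.le hm0 hm1)

lemma one_sub_cos_eq_two_mul_sin_sq (x : ℝ) : 1 - cos x = 2 * sin (x / 2) ^ 2 := by
  have h := sin_sq_eq_half_sub (x / 2)
  rw [mul_div_cancel₀ x two_ne_zero] at h
  linarith

lemma sq_mul_one_sub_cos_le_one_sub_cos_mul {l x : ℝ} (hl0 : 0 ≤ l) (hl1 : l ≤ 1) (hx0 : 0 ≤ x)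
    (hx : x ≤ 2 * π) : l ^ 2 * (1 - cos x) ≤ 1 - cos (l * x) := by
  have hx2 : x / 2 ∈ Set.Icc 0 π := ⟨by linarith, by linarith⟩
  have hsin : l * sin (x / 2) ≤ sin (l * x / 2) := by
    simpa only [smul_eq_mul, mul_div_assoc] using
      strictConcaveOn_sin_Icc.concaveOn.smul_le_map_smul ⟨le_rfl, pi_nonneg⟩ sin_zero.ge hx2
        hl0 hl1
  have hsin0 : 0 ≤ l * sin (x / 2) :=
    mul_nonneg hl0 (sin_nonneg_of_nonneg_of_le_pi hx2.1 hx2.2)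
  rw [one_sub_cos_eq_two_mul_sin_sq, one_sub_cos_eq_two_mul_sin_sq]
  nlinarith [pow_le_pow_left₀ hsin0 hsin 2]

lemma antitoneOn_log_one_add_mul_one_sub_cos_div_sq {α : ℝ} (hα : 0 ≤ α) :
    AntitoneOn (fun t => log (1 + α * (1 - cos t)) / t ^ 2) (Set.Ioc 0 (2 * π)) := by
  intro t ⟨ht0, _⟩ s ⟨hs0, hs⟩ hts
  set l := t / s
  have hl0 : 0 ≤ l := div_nonneg ht0.le hs0.le
  have hl1 : l ≤ 1 := (div_le_one hs0).2 hts
  have hlt : l * s = t := div_mul_cancel₀ t hs0.ne'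
  have hcos_s : 0 ≤ α * (1 - cos s) := mul_nonneg hα (sub_nonneg.2 (cos_le_one s))
  have hlog : l ^ 2 * log (1 + α * (1 - cos s)) ≤ log (1 + α * (1 - cos t)) := calc
    _ ≤ log (1 + l ^ 2 * (α * (1 - cos s))) :=
      mul_log_one_add_le_log_one_add_mul (sq_nonneg l) (pow_le_one₀ hl0 hl1)
        (neg_one_lt_zero.trans_le hcos_s)
    _ ≤ log (1 + α * (1 - cos t)) := by
      have hcos := sq_mul_one_sub_cos_le_one_sub_cos_mul hl0 hl1 hs0.le hs
      rw [hlt] at hcos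
      apply log_le_log (by positivity)
      nlinarith [mul_le_mul_of_nonneg_left hcos hα]
  rw [div_le_div_iff₀ (pow_pos hs0 2) (pow_pos ht0 2), show t ^ 2 = l ^ 2 * s ^ 2 by
    rw [← hlt, mul_pow]]
  nlinarith [mul_le_mul_of_nonneg_right hlog (sq_nonneg s)]

lemma log_one_add_mul_one_sub_cos_div_sq_le {α t x : ℝ} (hα : 0 ≤ α) (ht0 : 0 < t) (htx : t ≤ x)
    (htπ : t ≤ π) :
    log (1 + α * (1 - cos x)) / x ^ 2 ≤ log (1 + α * (1 - cos t)) / t ^ 2 := by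
  have hanti := antitoneOn_log_one_add_mul_one_sub_cos_div_sq hα
  have hmem {y : ℝ} (hy0 : 0 < y) (hyπ : y ≤ π) : y ∈ Set.Ioc 0 (2 * π) :=
    ⟨hy0, by linarith [pi_pos]⟩
  rcases le_or_gt x π with hxπ | hπx
  · exact hanti (hmem ht0 htπ) (hmem (ht0.trans_le htx) hxπ) htx
  have hlog_pi : log (1 + α * (1 - cos x)) ≤ log (1 + α * (1 - cos π)) := by
    apply log_le_log (by nlinarith [cos_le_one x])
    nlinarith [neg_one_le_cos x, cos_pi]
  calc log (1 + α * (1 - cos x)) / x ^ 2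
      ≤ log (1 + α * (1 - cos π)) / π ^ 2 := by
        refine div_le_div₀ (log_nonneg ?_) hlog_pi (pow_pos pi_pos 2) (by gcongr)
        nlinarith [cos_pi]
    _ ≤ log (1 + α * (1 - cos t)) / t ^ 2 := hanti (hmem ht0 htπ) (hmem pi_pos le_rfl) htπ

end Real

theorem one_add_alpha_ge_exp_general (γ α : ℝ) (hα : 0 < α)
    (c : ℝ)
    (hc : c = max ((1 / γ ^ 2) * Real.log (1 + α * (1 - Real.cos (γ / Real.sqrt α))))
                  ((1 / (α * Real.pi ^ 2)) * Real.log (1 + 2 * α)))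
    (t : ℝ) (ht0 : 0 ≤ t) (ht1 : t ≤ min (γ / Real.sqrt α) Real.pi) :
    Real.exp (c * α * t ^ 2) ≤ 1 + α * (1 - Real.cos t) := by
  rcases ht0.eq_or_lt with rfl | ht0
  · simp
  have hγ_term : 1 / γ ^ 2 * log (1 + α * (1 - cos (γ / √α))) * α
      = log (1 + α * (1 - cos (γ / √α))) / (γ / √α) ^ 2 := by
    rw [div_pow, sq_sqrt hα.le, div_div_eq_mul_div]
    ring
  have hπ_term : 1 / (α * π ^ 2) * log (1 + 2 * α) * α = log (1 + α * (1 - cos π)) / π ^ 2 := by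
    rw [cos_pi]
    field_simp
    ring_nf
  have hcα : c * α ≤ log (1 + α * (1 - cos t)) / t ^ 2 := by
    rw [hc, max_mul_of_nonneg _ _ hα.le, hγ_term, hπ_term]
    have htπ := ht1.trans (min_le_right _ _)
    exact max_le (log_one_add_mul_one_sub_cos_div_sq_le hα.le ht0 (ht1.trans (min_le_left _ _)) htπ)
      (log_one_add_mul_one_sub_cos_div_sq_le hα.le ht0 htπ htπ)
  have hpos : 0 < 1 + α * (1 - cos t) := by nlinarith [cos_le_one t]
  rw [← exp_log hpos, exp_le_exp]
  exact (le_div_iff₀ (pow_pos ht0 2)).1 hcα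

/-- Lemma 7: with `c := max { γ⁻²·ln(1 + α(1 - cos(γ/√α))), (απ²)⁻¹·ln(1 + 2α) }`,
one has `1 + α(1 - cos t) ≥ exp (c α t²)` for `0 ≤ t ≤ min {γ/√α, π}`. -/
theorem one_add_alpha_ge_exp (γ α : ℝ) (hγ : 0 < γ) (hα : 0 < α)
    (c : ℝ)
    (hc : c = max ((1 / γ ^ 2) * Real.log (1 + α * (1 - Real.cos (γ / Real.sqrt α))))
                  ((1 / (α * Real.pi ^ 2)) * Real.log (1 + 2 * α)))
    (t : ℝ) (ht0 : 0 ≤ t) (ht1 : t ≤ min (γ / Real.sqrt α) Real.pi) :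
    Real.exp (c * α * t ^ 2) ≤ 1 + α * (1 - Real.cos t) :=
  one_add_alpha_ge_exp_general γ α hα c hc t ht0 ht1
end

section
/- For a fixed γ > 0, the function g(x) := x·(1 − cos(γ/√x)) is increasing on [γ²/π², ∞). -/
/-!
With `u = γ / √x`, the derivative of `g` is `1 - cos u - (u / 2) sin u`. Writing `u = 2t`,
this is `2 sin t (sin t - t cos t)`, which is nonnegative for `t ∈ [0, π]`: there
`sin t ≥ 0`, and `t cos t ≤ sin t` is `t ≤ tan t` below `π / 2` and `cos t ≤ 0` above.
On `[γ² / π², ∞)` we have `u ≤ π`.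
-/

open Real Set

lemma mul_cos_le_sin {t : ℝ} (h0 : 0 ≤ t) (hπ : t ≤ π) : t * cos t ≤ sin t := by
  rcases lt_or_ge t (π / 2) with ht | ht
  · have hcos : 0 < cos t := cos_pos_of_mem_Ioo ⟨by linarith [pi_pos], ht⟩
    have htan := le_tan h0 ht
    rwa [tan_eq_sin_div_cos, le_div_iff₀ hcos] at htan
  · calc t * cos t ≤ 0 :=
          mul_nonpos_of_nonneg_of_nonpos h0 (cos_nonpos_of_pi_div_two_le_of_le ht (by linarith))
      _ ≤ sin t := sin_nonneg_of_nonneg_of_le_pi h0 hπ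

lemma half_mul_sin_le_one_sub_cos {u : ℝ} (h0 : 0 ≤ u) (h2π : u ≤ 2 * π) :
    u / 2 * sin u ≤ 1 - cos u := by
  obtain ⟨t, rfl⟩ : ∃ t, u = 2 * t := ⟨u / 2, by ring⟩
  have hsin : 0 ≤ sin t := sin_nonneg_of_nonneg_of_le_pi (by linarith) (by linarith)
  have hkey : sin t * (t * cos t) ≤ sin t * sin t :=
    mul_le_mul_of_nonneg_left (mul_cos_le_sin (by linarith) (by linarith)) hsin
  rw [sin_two_mul, cos_two_mul]
  nlinarith [sin_sq_add_cos_sq t]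

lemma div_sqrt_le_pi {γ x : ℝ} (hγ : 0 ≤ γ) (hx : γ ^ 2 / π ^ 2 ≤ x) :
    γ / √x ≤ π := by
  have hsq : γ ^ 2 ≤ π ^ 2 * x := by
    rwa [div_le_iff₀ (by positivity), mul_comm] at hx
  refine div_le_of_le_mul₀ (sqrt_nonneg x) pi_pos.le ?_
  calc γ = √(γ ^ 2) := (sqrt_sq hγ).symm
    _ ≤ √(π ^ 2 * x) := sqrt_le_sqrt hsq
    _ = π * √x := by rw [sqrt_mul (by positivity), sqrt_sq pi_pos.le]

lemma hasDerivAt_mul_one_sub_cos_div_sqrt (γ : ℝ) {x : ℝ} (hx : 0 < x) :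
    HasDerivAt (fun x : ℝ => x * (1 - cos (γ / √x)))
      (1 - cos (γ / √x) - γ / √x / 2 * sin (γ / √x)) x := by
  have hsqrt : √x ≠ 0 := (sqrt_pos.2 hx).ne'
  have hu : HasDerivAt (fun x => γ / √x) (-(γ / √x) / (2 * x)) x := by
    refine ((hasDerivAt_const x γ).fun_div (hasDerivAt_sqrt hx.ne') hsqrt).congr_deriv ?_
    field_simp
    rw [sq_sqrt hx.le]
    ring
  refine ((hasDerivAt_id' x).fun_mul ((hasDerivAt_const x 1).fun_sub hu.cos)).congr_deriv ?_
  field_simp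
  ring

/-- For fixed `γ > 0`, the function `g(x) = x (1 - cos (γ/√x))` is increasing
on `[γ²/π², ∞)`. -/
theorem g_monotoneOn (γ : ℝ) (hγ : 0 < γ) :
    MonotoneOn (fun x : ℝ => x * (1 - Real.cos (γ / Real.sqrt x)))
      (Set.Ici (γ ^ 2 / Real.pi ^ 2)) := by
  have hpos : ∀ x ∈ Ici (γ ^ 2 / π ^ 2), 0 < x :=
    fun x hx => lt_of_lt_of_le (by positivity) hx
  have hderiv x (hx : x ∈ Ici (γ ^ 2 / π ^ 2)) :=
    hasDerivAt_mul_one_sub_cos_div_sqrt γ (hpos x hx)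
  refine monotoneOn_of_hasDerivWithinAt_nonneg (convex_Ici _)
    (fun x hx => (hderiv x hx).continuousAt.continuousWithinAt)
    (fun x hx => (hderiv x (interior_subset hx)).hasDerivWithinAt)
    fun x hx => sub_nonneg.2 (half_mul_sin_le_one_sub_cos (by positivity) ?_)
  linarith [div_sqrt_le_pi hγ.le (interior_subset hx), pi_pos]
end

section
/- For all γ > 0 and all α ≥ γ²/π², one has (1/γ²)·ln[1 + α(1 − cos(γ/√α))] ≥ (1/γ²)·ln(1 + 2γ²/π²); and for all 0 < α ≤ γ²/π², one has (1/(απ²))·ln(1 + 2α) ≥ (1/γ²)·ln(1 + 2γ²/π²). Consequently c(α) := max of the two expressions satisfies c(α) ≥ (1/γ²)ln(1 + 2γ²/π²) for all α > 0. -/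
/-!
Jordan's inequality `cos t ≤ 1 - 2t²/π²` for `|t| ≤ π`, applied at `t = γ/√α`, bounds the first
branch of `c` below by its value at `α = γ²/π²` as soon as `α ≥ γ²/π²`. For `α ≤ γ²/π²` the second
branch is `(π²)⁻¹ · log(1 + 2α)/α`, a decreasing function of `α` because `log` is concave, so it
is bounded below by its value at `α = γ²/π²`. Both values equal `γ⁻² log(1 + 2γ²/π²)`.
-/

open Real Set

lemma antitoneOn_log_one_add_div : AntitoneOn (fun x : ℝ ↦ log (1 + x) / x) (Ioi 0) := by
  have shift : ∀ z ∈ Ioi (0 : ℝ), 1 + z ∈ {w ∈ Ioi (0 : ℝ) | 1 < w} := fun z hz ↦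
    ⟨by simp only [mem_Ioi] at hz ⊢; linarith, by simpa using hz⟩
  intro x hx y hy hxy
  have h := strictConcaveOn_log_Ioi.concaveOn.antitoneOn_slope_gt (by simp) (shift x hx)
    (shift y hy) (add_le_add_right hxy 1)
  simpa [slope_def_field] using h

lemma log_one_add_two_mul_div_le {a b : ℝ} (ha : 0 < a) (hab : a ≤ b) :
    log (1 + 2 * b) / b ≤ log (1 + 2 * a) / a := by
  have hb : 0 < b := ha.trans_le hab
  have h := antitoneOn_log_one_add_div (mul_pos two_pos ha) (mul_pos two_pos hb) (by linarith)
  calc log (1 + 2 * b) / b = 2 * (log (1 + 2 * b) / (2 * b)) := by field_simp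
    _ ≤ 2 * (log (1 + 2 * a) / (2 * a)) := by gcongr
    _ = log (1 + 2 * a) / a := by field_simp

lemma two_mul_sq_div_pi_sq_le_mul_one_sub_cos {α γ : ℝ} (hα : 0 < α) (hγα : γ ^ 2 / π ^ 2 ≤ α) :
    2 * γ ^ 2 / π ^ 2 ≤ α * (1 - cos (γ / √α)) := by
  have hγ_sq : (γ / √α) ^ 2 ≤ π ^ 2 := by
    rw [div_pow, sq_sqrt hα.le, div_le_iff₀ hα]
    rwa [div_le_iff₀ (by positivity), mul_comm] at hγα
  have hjordan := cos_le_one_sub_mul_cos_sq (abs_le_of_sq_le_sq hγ_sq pi_pos.le)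
  have hαt : α * (γ / √α) ^ 2 = γ ^ 2 := by
    rw [div_pow, sq_sqrt hα.le]; field_simp
  calc 2 * γ ^ 2 / π ^ 2 = α * (2 / π ^ 2 * (γ / √α) ^ 2) := by rw [← hαt]; ring
    _ ≤ α * (1 - cos (γ / √α)) := by gcongr; linarith

/-- Theorem 2b's key ingredient: for fixed `γ > 0`, both branches of
`c(α) = max { γ⁻² ln(1 + α(1 - cos(γ/√α))), (απ²)⁻¹ ln(1+2α) }` are bounded
below by `γ⁻² ln(1 + 2γ²/π²)` on their respective ranges, hence so is `c(α)`
for all `α > 0`. -/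
theorem c_lower_bound (γ : ℝ) (hγ : 0 < γ) :
    (∀ α : ℝ, γ ^ 2 / Real.pi ^ 2 ≤ α →
      (1 / γ ^ 2) * Real.log (1 + 2 * γ ^ 2 / Real.pi ^ 2) ≤
        (1 / γ ^ 2) * Real.log (1 + α * (1 - Real.cos (γ / Real.sqrt α)))) ∧
    (∀ α : ℝ, 0 < α → α ≤ γ ^ 2 / Real.pi ^ 2 →
      (1 / γ ^ 2) * Real.log (1 + 2 * γ ^ 2 / Real.pi ^ 2) ≤
        (1 / (α * Real.pi ^ 2)) * Real.log (1 + 2 * α)) ∧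
    (∀ α : ℝ, 0 < α →
      (1 / γ ^ 2) * Real.log (1 + 2 * γ ^ 2 / Real.pi ^ 2) ≤
        max ((1 / γ ^ 2) * Real.log (1 + α * (1 - Real.cos (γ / Real.sqrt α))))
            ((1 / (α * Real.pi ^ 2)) * Real.log (1 + 2 * α))) := by
  have large : ∀ α : ℝ, γ ^ 2 / π ^ 2 ≤ α →
      1 / γ ^ 2 * log (1 + 2 * γ ^ 2 / π ^ 2) ≤ 1 / γ ^ 2 * log (1 + α * (1 - cos (γ / √α))) := by
    intro α hα
    have hα0 : 0 < α := (by positivity : 0 < γ ^ 2 / π ^ 2).trans_le hα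
    have hjordan := two_mul_sq_div_pi_sq_le_mul_one_sub_cos hα0 hα
    gcongr
  have small : ∀ α : ℝ, 0 < α → α ≤ γ ^ 2 / π ^ 2 →
      1 / γ ^ 2 * log (1 + 2 * γ ^ 2 / π ^ 2) ≤ 1 / (α * π ^ 2) * log (1 + 2 * α) := by
    intro α hα hαβ
    have hmono := log_one_add_two_mul_div_le hα hαβ
    calc 1 / γ ^ 2 * log (1 + 2 * γ ^ 2 / π ^ 2)
        = log (1 + 2 * (γ ^ 2 / π ^ 2)) / (γ ^ 2 / π ^ 2) / π ^ 2 := by field_simp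
      _ ≤ log (1 + 2 * α) / α / π ^ 2 := by gcongr
      _ = 1 / (α * π ^ 2) * log (1 + 2 * α) := by field_simp
  refine ⟨large, small, fun α hα ↦ ?_⟩
  rcases le_total (γ ^ 2 / π ^ 2) α with hαβ | hαβ
  · exact (large α hαβ).trans (le_max_left _ _)
  · exact (small α hα hαβ).trans (le_max_right _ _)
end

section
/- Let X_1,…,X_p be independent integer-valued random variables such that each X_j is uniformly distributed on a set of N_j distinct integers a_{j,1} < a_{j,2} < … < a_{j,N_j}. If (i_1,…,i_p) and (i'_1,…,i'_p) are tuples with 1 ≤ i_j, i'_j ≤ N_j and a_{1,i_1} + … + a_{p,i_p} = a_{1,i'_1} + … + a_{p,i'_p}, then the tuples are equal or incomparable in the componentwise partial order. Consequently, conc(X_1 + … + X_p) ≤ w([N_1] × … × [N_p]) / (N_1 N_2 ⋯ N_p), where w denotes the width (maximum antichain size) of the product of chains of lengths N_1,…,N_p. -/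
open MeasureTheory ProbabilityTheory ENNReal

/-- The width (maximum antichain cardinality) of the product of chains
`[N 0] × … × [N (p-1)]`, with the componentwise partial order. -/
noncomputable def chainProductWidth (p : ℕ) (N : Fin p → ℕ) : ℕ :=
  sSup {c | ∃ A : Finset ((j : Fin p) → Fin (N j)),
    IsAntichain (· ≤ ·) (A : Set ((j : Fin p) → Fin (N j))) ∧ A.card = c}

/-!
Since every `a j` is strictly increasing, `i ↦ ∑ j, a j (i j)` is strictly
monotone on the product of chains, so each of its fibres is an antichain. Almost surely
every `X j` takes one of the values `a j i`, so the event `∑ j, X j = z` is covered, up to a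
null set, by the cells `{X = a i}` with `i` in the fibre over `z`. By independence each cell
has probability `(∏ j, N j)⁻¹`, and the fibre has at most `chainProductWidth p N` elements.
-/

section SumFiber

variable {ι : Type*} [Fintype ι] {α : ι → Type*} [∀ j, LinearOrder (α j)]
  {M : Type*} [AddCommMonoid M] [PartialOrder M] [IsOrderedCancelAddMonoid M]

def sumFiber [DecidableEq ι] [∀ j, Fintype (α j)] [DecidableEq M] (a : (j : ι) → α j → M)
    (z : M) : Finset ((j : ι) → α j) :=
  Finset.univ.filter fun i => ∑ j, a j (i j) = z

theorem eq_of_le_of_sum_eq {a : (j : ι) → α j → M} (ha : ∀ j, StrictMono (a j))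
    {i i' : (j : ι) → α j} (hle : i ≤ i') (hsum : ∑ j, a j (i j) = ∑ j, a j (i' j)) :
    i = i' := by
  have hcoord := (Finset.sum_eq_sum_iff_of_le fun j _ => (ha j).monotone (hle j)).mp hsum
  exact funext fun j => (ha j).injective (hcoord j (Finset.mem_univ j))

theorem eq_or_not_comparable_of_sum_eq {a : (j : ι) → α j → M} (ha : ∀ j, StrictMono (a j))
    {i i' : (j : ι) → α j} (hsum : ∑ j, a j (i j) = ∑ j, a j (i' j)) :
    i = i' ∨ ¬(i ≤ i' ∨ i' ≤ i) := by
  refine or_iff_not_imp_left.mpr fun hne hcomp => hne ?_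
  rcases hcomp with hle | hle
  · exact eq_of_le_of_sum_eq ha hle hsum
  · exact (eq_of_le_of_sum_eq ha hle hsum.symm).symm

theorem isAntichain_sumFiber [DecidableEq ι] [∀ j, Fintype (α j)] [DecidableEq M]
    {a : (j : ι) → α j → M} (ha : ∀ j, StrictMono (a j)) (z : M) :
    IsAntichain (· ≤ ·) (sumFiber a z : Set ((j : ι) → α j)) := by
  intro i hi i' hi' hne hle
  simp only [sumFiber, Finset.coe_filter, Finset.mem_univ, true_and, Set.mem_ofPred_eq] at hi hi'
  exact hne (eq_of_le_of_sum_eq ha hle (hi.trans hi'.symm))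

end SumFiber

theorem card_le_chainProductWidth {p : ℕ} {N : Fin p → ℕ}
    {A : Finset ((j : Fin p) → Fin (N j))}
    (hA : IsAntichain (· ≤ ·) (A : Set ((j : Fin p) → Fin (N j)))) :
    A.card ≤ chainProductWidth p N :=
  le_csSup ⟨Fintype.card ((j : Fin p) → Fin (N j)), by
    rintro c ⟨B, -, rfl⟩
    exact B.card_le_univ⟩ ⟨A, hA, rfl⟩

section Probability

variable {Ω : Type*} [MeasurableSpace Ω] {μ : Measure Ω}

theorem ae_mem_range_of_measure_eq_zero {α β : Type*} [Countable β] {Y : Ω → β} {a : α → β}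
    (hsupp : ∀ k, (∀ i, a i ≠ k) → μ {ω | Y ω = k} = 0) :
    ∀ᵐ ω ∂μ, Y ω ∈ Set.range a := by
  have hcover : {ω | Y ω ∉ Set.range a} = ⋃ k ∈ (Set.range a)ᶜ, {ω | Y ω = k} := by
    ext ω
    simp
  rw [ae_iff, hcover, measure_biUnion_null_iff (Set.to_countable _)]
  exact fun k hk => hsupp k fun i hi => hk ⟨i, hi⟩

theorem measure_iInter_eq_inv_prod {ι β : Type*} [Fintype ι] [MeasurableSpace β]
    [MeasurableSingletonClass β] {X : ι → Ω → β} (hindep : iIndepFun X μ) {N : ι → ℕ}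
    {b : ι → β} (hb : ∀ j, μ {ω | X j ω = b j} = 1 / (N j : ℝ≥0∞)) :
    μ (⋂ j, X j ⁻¹' {b j}) = (∏ j, (N j : ℝ≥0∞))⁻¹ := by
  have hmul := hindep.measure_inter_preimage_eq_mul (S := Finset.univ)
    (sets := fun j => {b j}) fun j _ => measurableSet_singleton _
  simp only [Finset.mem_univ, Set.iInter_true] at hmul
  rw [hmul, ENNReal.prod_inv_distrib fun _ _ _ _ _ => Or.inr (natCast_ne_top _)]
  exact Finset.prod_congr rfl fun j _ => (hb j).trans (one_div _)

end Probability

theorem conc_sum_le_width_div_general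
    {Ω : Type*} [MeasurableSpace Ω] (μ : Measure Ω)
    (p : ℕ) (N : Fin p → ℕ)
    (a : (j : Fin p) → Fin (N j) → ℤ) (ha : ∀ j, StrictMono (a j))
    (X : Fin p → Ω → ℤ)
    (hindep : iIndepFun X μ)
    (hunif : ∀ j i, μ {ω | X j ω = a j i} = 1 / (N j : ℝ≥0∞))
    (hsupp : ∀ j k, (∀ i, a j i ≠ k) → μ {ω | X j ω = k} = 0) :
    (∀ i i' : (j : Fin p) → Fin (N j),
        (∑ j, a j (i j)) = (∑ j, a j (i' j)) →
          i = i' ∨ ¬(i ≤ i' ∨ i' ≤ i)) ∧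
    ∀ z : ℤ,
      μ {ω | (∑ j, X j ω) = z} ≤
        (chainProductWidth p N : ℝ≥0∞) / ∏ j, (N j : ℝ≥0∞) := by
  refine ⟨fun i i' => eq_or_not_comparable_of_sum_eq ha, fun z => ?_⟩
  let cell (i : (j : Fin p) → Fin (N j)) : Set Ω := ⋂ j, X j ⁻¹' {a j (i j)}
  have hcover : {ω | ∑ j, X j ω = z} ≤ᵐ[μ] ⋃ i ∈ sumFiber a z, cell i := by
    filter_upwards [ae_all_iff.mpr fun j => ae_mem_range_of_measure_eq_zero (hsupp j)]
      with ω hrange hz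
    choose i hi using hrange
    refine Set.mem_biUnion (x := i) ?_ (Set.mem_iInter.mpr fun j => (hi j).symm)
    rw [Finset.mem_coe, sumFiber, Finset.mem_filter, ← hz]
    exact ⟨Finset.mem_univ i, Finset.sum_congr rfl fun j _ => hi j⟩
  calc μ {ω | ∑ j, X j ω = z}
      ≤ ∑ i ∈ sumFiber a z, μ (cell i) := (measure_mono_ae hcover).trans
        (measure_biUnion_finset_le _ _)
    _ = (sumFiber a z).card * (∏ j, (N j : ℝ≥0∞))⁻¹ := by
        simp [cell, measure_iInter_eq_inv_prod hindep fun j => hunif j _]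
    _ ≤ chainProductWidth p N * (∏ j, (N j : ℝ≥0∞))⁻¹ := by
        gcongr
        exact card_le_chainProductWidth (isAntichain_sumFiber ha z)
    _ = chainProductWidth p N / ∏ j, (N j : ℝ≥0∞) := (div_eq_mul_inv _ _).symm

/-- Proposition 3a (uniform case): if `X₁, …, X_p` are independent, `X j`
uniform on the strictly increasing values `a j 0 < a j 1 < …` (`N j` of them),
then tuples with equal value-sums are equal or incomparable in the
componentwise order, and consequently
`conc (X₁ + ⋯ + X_p) ≤ w([N₁] × ⋯ × [N_p]) / (N₁ ⋯ N_p)`. -/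
theorem conc_sum_le_width_div
    {Ω : Type*} [MeasurableSpace Ω] (μ : Measure Ω) [IsProbabilityMeasure μ]
    (p : ℕ) (N : Fin p → ℕ) (hN : ∀ j, 0 < N j)
    (a : (j : Fin p) → Fin (N j) → ℤ) (ha : ∀ j, StrictMono (a j))
    (X : Fin p → Ω → ℤ) (hXmeas : ∀ j, Measurable (X j))
    (hindep : iIndepFun X μ)
    (hunif : ∀ j i, μ {ω | X j ω = a j i} = 1 / (N j : ℝ≥0∞))
    (hsupp : ∀ j k, (∀ i, a j i ≠ k) → μ {ω | X j ω = k} = 0) :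
    (∀ i i' : (j : Fin p) → Fin (N j),
        (∑ j, a j (i j)) = (∑ j, a j (i' j)) →
          i = i' ∨ ¬(i ≤ i' ∨ i' ≤ i)) ∧
    ∀ z : ℤ,
      μ {ω | (∑ j, X j ω) = z} ≤
        (chainProductWidth p N : ℝ≥0∞) / ∏ j, (N j : ℝ≥0∞) :=
  conc_sum_le_width_div_general μ p N a ha X hindep hunif hsupp
end
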